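/- Let G be a module over Z_p (the integers localized at a prime p) with partial decomposition bases C and C'. Suppose that for some equivalence class e of Ulm sequences and some n ∈ ℕ, ŵ_C(e,G) ≥ n, i.e. some X ∈ C contains at least n elements x with U(x) ∈ e. Then for every Y ∈ C' there is a Ỹ ∈ C' such that Y ⊆ Ỹ and Ỹ contains at least n elements y with U(y) ∈ e. -/

import Mathlib

noncomputable section

namespace UlmW

universe u

variable {R : Type*} [CommRing R]

/-- The submodule `p^α M`, defined by transfinite recursion on `α`. -/
def ppow {M : Type u} [AddCommGroup M] [Module R M] (p : R) (α : Ordinal.{u}) :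
    Submodule R M :=
  Ordinal.limitRecOn α ⊤ (fun _ S => Submodule.map (LinearMap.lsmul R M p) S)
    fun β _ ih => ⨅ (γ : Set.Iio β), ih γ.1 γ.2

open scoped Classical in
/-- The `p`-height of `x`, with `⊤` playing the role of `∞`. -/
def pheight {M : Type u} [AddCommGroup M] [Module R M] (p : R) (x : M) :
    WithTop Ordinal.{u} :=
  if h : ∃ α : Ordinal.{u}, x ∈ ppow p α ∧ x ∉ ppow p (α + 1) then (h.choose : WithTop Ordinal)
  else ⊤

/-- `H⁰ = {x : ∃ a ≠ 0, a • x ∈ H}`. -/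
def hull {M : Type u} [AddCommGroup M] [Module R M] (H : Submodule R M) : Set M :=
  {x | ∃ a : R, a ≠ 0 ∧ a • x ∈ H}

/-- `X` is a decomposition set with respect to the single prime `p`. -/
def IsDecompWrt {M : Type u} [AddCommGroup M] [Module R M] (p : R) (X : Set M) : Prop :=
  (LinearIndependent R (fun x : X => (x : M))) ∧
  (∀ x ∈ X, ∀ a : R, a ≠ 0 → a • x ≠ 0) ∧
  (∀ s : Finset M, ↑s ⊆ X → ∀ c : M → R,
    pheight p (∑ x ∈ s, c x • x) = s.inf fun x => pheight p (c x • x))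

/-- `X` is a decomposition set (with respect to every prime of `R`). -/
def IsDecompositionSet (R : Type*) [CommRing R] {M : Type u} [AddCommGroup M] [Module R M]
    (X : Set M) : Prop :=
  ∀ p : R, Prime p → IsDecompWrt p X

/-- partial decomposition basis, heights taken w.r.t. a fixed prime `p`. -/
def IsPDBWrt {M : Type u} [AddCommGroup M] [Module R M] (p : R) (C : Set (Set M)) : Prop :=
  C.Nonempty ∧ (∀ X ∈ C, X.Finite) ∧ (∀ X ∈ C, IsDecompWrt p X) ∧
  ∀ X ∈ C, ∀ x : M, ∃ Y ∈ C, X ⊆ Y ∧ x ∈ hull (Submodule.span R Y)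

/-- partial decomposition basis (heights w.r.t. all primes of `R`). -/
def IsPDB (R : Type*) [CommRing R] {M : Type u} [AddCommGroup M] [Module R M] (C : Set (Set M)) : Prop :=
  C.Nonempty ∧ (∀ X ∈ C, X.Finite) ∧ (∀ X ∈ C, IsDecompositionSet R X) ∧
  ∀ X ∈ C, ∀ x : M, ∃ Y ∈ C, X ⊆ Y ∧ x ∈ hull (Submodule.span R Y)

/-- A partial isomorphism system `I : G ≅_p H`. -/
def IsPartialIsoSystem {M N : Type*} [AddCommGroup M] [Module R M]
    [AddCommGroup N] [Module R N] (I : Set (M →ₗ.[R] N)) : Prop :=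
  I.Nonempty ∧
  (∀ f ∈ I, Function.Injective f.toFun) ∧
  (∀ f ∈ I, ∀ a : M, ∃ g ∈ I, f ≤ g ∧ a ∈ g.domain) ∧
  (∀ f ∈ I, ∀ b : N, ∃ g ∈ I, f ≤ g ∧ ∃ y : g.domain, g y = b)

/-- The Ulm sequence of `x`: `U(x) = (|pⁱ x|)ᵢ`. -/
def UlmSeqOf {M : Type u} [AddCommGroup M] [Module R M] (p : R) (x : M) :
    ℕ → WithTop Ordinal.{u} :=
  fun i => pheight p ((p ^ i) • x)

/-- `u` is an Ulm sequence. -/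
def IsUlmSeq (u : ℕ → WithTop Ordinal.{u}) : Prop :=
  ∀ i, (u i = ⊤ → u (i + 1) = ⊤) ∧ (u i ≠ ⊤ → u i < u (i + 1))

/-- Equivalence of Ulm sequences. -/
def UlmEquiv (u v : ℕ → WithTop Ordinal.{u}) : Prop :=
  ∃ m n : ℕ, ∀ i, u (i + n) = v (i + m)

/-- `X` contains at least `n` elements whose Ulm sequence is equivalent to `u`. -/
def HasAtLeast {M : Type u} [AddCommGroup M] [Module R M] (p : R)
    (u : ℕ → WithTop Ordinal.{u}) (n : ℕ) (X : Set M) : Prop :=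
  ∃ s : Finset M, ↑s ⊆ X ∧ n ≤ s.card ∧ ∀ x ∈ s, UlmEquiv (UlmSeqOf p x) u

/-- `ŵ_C(e,G)` where `e` is the class of the Ulm sequence `u`. -/
def wHat {M : Type u} [AddCommGroup M] [Module R M] (p : R) (C : Set (Set M))
    (u : ℕ → WithTop Ordinal.{u}) : ℕ∞ :=
  sSup {N : ℕ∞ | ∃ n : ℕ, N = (n : ℕ∞) ∧ ∃ X ∈ C, HasAtLeast p u n X}

/-- `x` is proper with respect to `S`. -/
def IsProper {M : Type u} [AddCommGroup M] [Module R M] (p : R) (S : Submodule R M)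
    (x : M) : Prop :=
  ∀ s ∈ S, pheight p (x + s) ≤ pheight p x

/-- `H` is a nice submodule. -/
def IsNice {M : Type u} [AddCommGroup M] [Module R M] (p : R) (H : Submodule R M) : Prop :=
  ∀ x : M, ∃ h ∈ H, ∀ h' ∈ H, pheight p (x + h') ≤ pheight p (x + h)

/-- The Ulm invariant `u_p(σ, M)`: the dimension of `(p^σ M)[p]/(p^{σ+1} M)[p]`
over the residue field `R/(p)`. -/
def uCard (p : R) (M : Type u) [AddCommGroup M] [Module R M] (σ : Ordinal.{u}) :
    Cardinal :=
  let V : Submodule R M := ppow p σ ⊓ Submodule.torsionBy R M p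
  let W : Submodule R V := (ppow p (σ + 1) ⊓ Submodule.torsionBy R M p).comap V.subtype
  Module.rank (R ⧸ Ideal.span {p})
    ((V ⧸ W) ⧸ (Ideal.span {p} • (⊤ : Submodule R (V ⧸ W))))

/-- `û_p(σ, M) = min (u_p(σ, M), ω)`. -/
def uHat (p : R) (M : Type u) [AddCommGroup M] [Module R M] (σ : Ordinal.{u}) : Cardinal :=
  min (uCard p M σ) Cardinal.aleph0

/-- `û_p(∞, M) = min (dim (p^∞ M)[p], ω)`. -/
def uHatInf (p : R) (M : Type u) [AddCommGroup M] [Module R M] : Cardinal :=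
  let V : Submodule R M := (⨅ α : Ordinal.{u}, ppow p α) ⊓ Submodule.torsionBy R M p
  min (Module.rank (R ⧸ Ideal.span {p})
    (V ⧸ (Ideal.span {p} • (⊤ : Submodule R V)))) Cardinal.aleph0

end UlmW

open UlmW

/-- The ideal `(p) ⊆ ℤ` is prime. -/
instance zpSpanPrime (p : ℤ) [hp : Fact (Prime p)] : (Ideal.span {p} : Ideal ℤ).IsPrime :=
  (Ideal.span_singleton_prime hp.out.ne_zero).mpr hp.out

/-- `ℤ_(p)`, the integers localized at the prime `p`. -/
abbrev Zp (p : ℤ) [Fact (Prime p)] : Type :=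
  Localization.AtPrime (Ideal.span {p} : Ideal ℤ)


universe u

open UlmW

/-!
Enlarge `Y` within `C'` to `Z` whose hull contains the `n` given elements of class `e`, then enlarge
`X` within `C` to `X'` whose hull contains `Z`. If `Z` had fewer than `n` elements of class `e`,
linear algebra over `ℤ_(p)` gives a nonzero combination `v` of the given elements that is also a
combination of elements of `Z` outside class `e`. Since heights are computed coordinatewise in a
decomposition set, the Ulm sequence of `v`, read over `X'`, is eventually that of one term of
class `e`; read over `Z`, and compared with the `X'`-coordinates of the elements of `Z`, it forces
one element of `Z` in the support of `v` into class `e`.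
-/

namespace UlmW

section Height

variable {R : Type*} [CommRing R] {M : Type u} [AddCommGroup M] [Module R M] (p : R)

lemma ppow_zero : ppow (M := M) p 0 = ⊤ :=
  Ordinal.limitRecOn_zero _ _ _

lemma ppow_add_one (α : Ordinal.{u}) :
    ppow (M := M) p (α + 1) = (ppow p α).map (LinearMap.lsmul R M p) :=
  Ordinal.limitRecOn_add_one _ _ _ _

lemma ppow_of_isSuccLimit {β : Ordinal.{u}} (hβ : Order.IsSuccLimit β) :
    ppow (M := M) p β = ⨅ γ : Set.Iio β, ppow p γ.1 :=
  Ordinal.limitRecOn_limit _ _ _ _ hβ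

lemma ppow_antitone : Antitone (ppow (M := M) p) := by
  intro α β hαβ
  induction β using Ordinal.limitRecOn with
  | zero => rw [nonpos_iff_eq_zero.mp hαβ]
  | add_one γ IH =>
    rcases hαβ.eq_or_lt with rfl | hlt
    · rfl
    · rw [ppow_add_one]
      rintro _ ⟨x, hx, rfl⟩
      exact Submodule.smul_mem _ p (IH (Order.lt_add_one_iff.1 hlt) hx)
  | limit β hβ _ =>
    rcases hαβ.eq_or_lt with rfl | hlt
    · rfl
    · rw [ppow_of_isSuccLimit p hβ]
      exact iInf_le _ (⟨α, hlt⟩ : Set.Iio β)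

lemma mem_ppow_of_not_exists {x : M}
    (hx : ¬∃ α : Ordinal.{u}, x ∈ ppow p α ∧ x ∉ ppow p (α + 1)) (α : Ordinal.{u}) :
    x ∈ ppow p α := by
  induction α using Ordinal.limitRecOn with
  | zero => simp [ppow_zero]
  | add_one γ IH => exact not_not.1 fun hmem => hx ⟨γ, IH, hmem⟩
  | limit β hβ IH =>
    rw [ppow_of_isSuccLimit p hβ, Submodule.mem_iInf]
    exact fun γ => IH γ.1 γ.2

lemma coe_le_pheight_iff {x : M} {α : Ordinal.{u}} :
    (α : WithTop Ordinal.{u}) ≤ pheight p x ↔ x ∈ ppow p α := by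
  classical
  unfold pheight
  split_ifs with h
  · obtain ⟨hmem, hnot⟩ := h.choose_spec
    rw [WithTop.coe_le_coe]
    refine ⟨fun hle => ppow_antitone p hle hmem, fun hx => ?_⟩
    by_contra! hlt
    exact hnot (ppow_antitone p (Order.add_one_le_of_lt hlt) hx)
  · exact iff_of_true le_top (mem_ppow_of_not_exists p h α)

lemma pheight_le_of_forall_mem {x y : M}
    (hxy : ∀ α : Ordinal.{u}, x ∈ ppow p α → y ∈ ppow p α) : pheight p x ≤ pheight p y :=
  WithTop.forall_coe_le_iff_le.mp fun α hα =>
    (coe_le_pheight_iff p).2 (hxy α ((coe_le_pheight_iff p).1 hα))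

lemma ulmSeqOf_le_smul (c : R) (x : M) : UlmSeqOf p x ≤ UlmSeqOf p (c • x) := fun j => by
  simp only [UlmSeqOf, smul_comm (p ^ j) c x]
  exact pheight_le_of_forall_mem p fun _ h => Submodule.smul_mem _ c h

lemma ulmSeqOf_le_of_dvd {a b : R} (h : a ∣ b) (x : M) :
    UlmSeqOf p (a • x) ≤ UlmSeqOf p (b • x) := by
  obtain ⟨c, rfl⟩ := h
  rw [mul_comm, mul_smul]
  exact ulmSeqOf_le_smul p c (a • x)

lemma ulmSeqOf_unit_smul (v : Rˣ) (x : M) : UlmSeqOf p ((v : R) • x) = UlmSeqOf p x := by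
  refine le_antisymm ?_ (ulmSeqOf_le_smul p _ x)
  simpa [smul_smul] using ulmSeqOf_le_smul p (↑v⁻¹ : R) ((v : R) • x)

lemma ulmSeqOf_pow_smul (k : ℕ) (x : M) :
    UlmSeqOf p (p ^ k • x) = fun j => UlmSeqOf p x (j + k) := by
  funext j
  simp only [UlmSeqOf, smul_smul, ← pow_add]

end Height

section UlmSequences

variable {u v w : ℕ → WithTop Ordinal.{u}}

lemma IsUlmSeq.monotone (hu : IsUlmSeq u) : Monotone u :=
  monotone_nat_of_le_succ fun i => by
    by_cases h : u i = ⊤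
    · rw [h, (hu i).1 h]
    · exact ((hu i).2 h).le

lemma UlmEquiv.symm : UlmEquiv u v → UlmEquiv v u :=
  fun ⟨m, n, h⟩ => ⟨n, m, fun i => (h i).symm⟩

lemma UlmEquiv.trans : UlmEquiv u v → UlmEquiv v w → UlmEquiv u w := by
  rintro ⟨m, n, h⟩ ⟨m', n', h'⟩
  refine ⟨m + m', n + n', fun i => ?_⟩
  rw [← add_assoc, show i + n + n' = i + n' + n by omega, h, show i + n' + m = i + m + n' by omega,
    h', add_assoc]

lemma ulmEquiv_shift (k : ℕ) : UlmEquiv (fun j => u (j + k)) u :=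
  ⟨k, 0, fun _ => rfl⟩

lemma exists_finset_inf_eventually_eq {ι : Type*} {e : ℕ → WithTop Ordinal.{u}}
    (he : Monotone e) {t : Finset ι} (ht : t.Nonempty) {f : ι → ℕ → WithTop Ordinal.{u}}
    (hf : ∀ i ∈ t, UlmEquiv (f i) e) :
    ∃ i₀ ∈ t, ∃ N : ℕ, ∀ j, t.inf f (j + N) = f i₀ (j + N) := by
  choose! m n hmn using hf
  set N := t.sup n
  have hshift : ∀ i ∈ t, ∀ j, f i (j + N) = e (j + (N - n i + m i)) := by
    intro i hi j
    have hni : n i ≤ N := Finset.le_sup hi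
    have := hmn i hi (j + (N - n i))
    rwa [show j + (N - n i) + n i = j + N by omega, add_assoc] at this
  obtain ⟨i₀, hi₀, hmin⟩ := t.exists_min_image (fun i => N - n i + m i) ht
  refine ⟨i₀, hi₀, N, fun j => ?_⟩
  rw [Finset.inf_apply]
  refine le_antisymm (Finset.inf_le hi₀) (Finset.le_inf fun i hi => ?_)
  rw [hshift i₀ hi₀, hshift i hi]
  exact he (Nat.add_le_add_left (hmin i hi) j)

end UlmSequences

section DiscreteValuationRing

variable {R : Type*} [CommRing R] [IsDomain R] [IsDiscreteValuationRing R]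
  {M : Type u} [AddCommGroup M] [Module R M] {p : R}

lemma ulmEquiv_ulmSeqOf_smul (hp : Irreducible p) {a : R} (ha : a ≠ 0) (x : M) :
    UlmEquiv (UlmSeqOf p (a • x)) (UlmSeqOf p x) := by
  obtain ⟨k, v, rfl⟩ := IsDiscreteValuationRing.eq_unit_mul_pow_irreducible ha hp
  rw [mul_smul, ulmSeqOf_unit_smul, ulmSeqOf_pow_smul]
  exact ulmEquiv_shift k

lemma exists_dvd_sum_of_sum_ne_zero {ι : Type*} {s : Finset ι} {f : ι → R}
    (hs : ∑ i ∈ s, f i ≠ 0) : ∃ i₀ ∈ s, f i₀ ∣ ∑ i ∈ s, f i := by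
  obtain ⟨i₀, hi₀, hmin⟩ := s.exists_min_image (IsDiscreteValuationRing.addVal R ∘ f)
    (Finset.nonempty_of_sum_ne_zero hs)
  exact ⟨i₀, hi₀, Finset.dvd_sum fun i hi =>
    IsDiscreteValuationRing.addVal_le_iff_dvd.1 (hmin i hi)⟩

end DiscreteValuationRing

section DecompositionSets

variable {R : Type*} [CommRing R] {M : Type u} [AddCommGroup M] [Module R M] {p : R} {D : Set M}

lemma IsDecompWrt.ulmSeqOf_sum (hD : IsDecompWrt p D) {s : Finset M} (hs : ↑s ⊆ D) (c : M → R) :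
    UlmSeqOf p (∑ x ∈ s, c x • x) = s.inf fun x => UlmSeqOf p (c x • x) := by
  funext j
  have := hD.2.2 s hs fun x => p ^ j * c x
  simpa only [Finset.inf_apply, UlmSeqOf, mul_smul, ← Finset.smul_sum] using this

lemma IsDecompWrt.ulmSeqOf_sum_le (hD : IsDecompWrt p D) {s : Finset M} (hs : ↑s ⊆ D)
    (c : M → R) {x : M} (hx : x ∈ s) : UlmSeqOf p (∑ x ∈ s, c x • x) ≤ UlmSeqOf p (c x • x) := by
  rw [hD.ulmSeqOf_sum hs]
  exact Finset.inf_le hx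

lemma IsDecompWrt.eq_of_sum_eq (hD : IsDecompWrt p D) {s : Finset M} (hs : ↑s ⊆ D)
    {c c' : M → R} (h : ∑ x ∈ s, c x • x = ∑ x ∈ s, c' x • x) {x : M} (hx : x ∈ s) :
    c x = c' x := by
  have hsub : ∑ x ∈ s, (c - c') x • x = 0 := by
    simp only [Pi.sub_apply, sub_smul, Finset.sum_sub_distrib, h, sub_self]
  exact sub_eq_zero.1 (linearIndepOn_iff'.1 (show LinearIndepOn R id D from hD.1) s _ hs hsub x hx)

variable [IsDomain R] [IsDiscreteValuationRing R]

lemma IsDecompWrt.exists_ulmSeqOf_sum_eventually_eq (hD : IsDecompWrt p D) (hp : Irreducible p)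
    {e : ℕ → WithTop Ordinal.{u}} (he : Monotone e) {s : Finset M} (hs : ↑s ⊆ D) {c : M → R}
    (hc : ∀ x ∈ s, c x ≠ 0 → UlmEquiv (UlmSeqOf p x) e) (hc₀ : ∃ x ∈ s, c x ≠ 0) :
    ∃ x₀ ∈ s, c x₀ ≠ 0 ∧ ∃ N : ℕ, ∀ j,
      UlmSeqOf p (∑ x ∈ s, c x • x) (j + N) = UlmSeqOf p (c x₀ • x₀) (j + N) := by
  classical
  set t := s.filter (c · ≠ 0)
  have hts : t ⊆ s := Finset.filter_subset _ s
  have hsum : ∑ x ∈ t, c x • x = ∑ x ∈ s, c x • x :=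
    Finset.sum_filter_of_ne fun x _ hx hcx => hx (by rw [hcx, zero_smul])
  obtain ⟨x₁, hx₁, hcx₁⟩ := hc₀
  obtain ⟨x₀, hx₀, N, hN⟩ := exists_finset_inf_eventually_eq he
    ⟨x₁, Finset.mem_filter.2 ⟨hx₁, hcx₁⟩⟩ (f := fun x => UlmSeqOf p (c x • x)) fun x hx =>
      (ulmEquiv_ulmSeqOf_smul hp (Finset.mem_filter.1 hx).2 x).trans
        (hc x (hts hx) (Finset.mem_filter.1 hx).2)
  refine ⟨x₀, hts hx₀, (Finset.mem_filter.1 hx₀).2, N, fun j => ?_⟩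
  rw [← hsum, hD.ulmSeqOf_sum ((Finset.coe_subset.2 hts).trans hs), hN]

end DecompositionSets

section Hull

variable {R : Type*} [CommRing R] {M : Type u} [AddCommGroup M] [Module R M]

lemma hull_mono {H H' : Submodule R M} (h : H ≤ H') : hull H ⊆ hull H' :=
  fun _ ⟨a, ha, hax⟩ => ⟨a, ha, h hax⟩

lemma IsPDBWrt.exists_finset_superset_subset_hull {p : R} {C : Set (Set M)} (hC : IsPDBWrt p C)
    {X : Set M} (hX : X ∈ C) (s : Finset M) :
    ∃ X' : Finset M, ↑X' ∈ C ∧ X ⊆ ↑X' ∧ ↑s ⊆ hull (Submodule.span R (X' : Set M)) := by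
  classical
  induction s using Finset.induction_on with
  | empty => exact ⟨(hC.2.1 X hX).toFinset, by simpa using hX, by simp, by simp⟩
  | insert a s _ IH =>
    obtain ⟨X₁, hX₁C, hXX₁, hsX₁⟩ := IH
    obtain ⟨X₂, hX₂C, hX₁X₂, haX₂⟩ := hC.2.2.2 _ hX₁C a
    refine ⟨(hC.2.1 X₂ hX₂C).toFinset, by simpa using hX₂C, by simpa using hXX₁.trans hX₁X₂, ?_⟩
    rw [Finset.coe_insert, Set.insert_subset_iff, Set.Finite.coe_toFinset]
    exact ⟨haX₂, hsX₁.trans (hull_mono (Submodule.span_mono hX₁X₂))⟩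

variable [IsDomain R]

lemma exists_smul_mem_of_subset_hull {H : Submodule R M} {s : Finset M} (hs : ↑s ⊆ hull H) :
    ∃ a : R, a ≠ 0 ∧ ∀ x ∈ s, a • x ∈ H := by
  classical
  induction s using Finset.induction_on with
  | empty => exact ⟨1, one_ne_zero, by simp⟩
  | insert y s _ IH =>
    rw [Finset.coe_insert, Set.insert_subset_iff] at hs
    obtain ⟨a, ha, has⟩ := IH hs.2
    obtain ⟨b, hb, hby⟩ := hs.1
    refine ⟨b * a, mul_ne_zero hb ha, fun x hx => ?_⟩
    rcases Finset.mem_insert.1 hx with rfl | hx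
    · rw [mul_comm, mul_smul]
      exact H.smul_mem a hby
    · rw [mul_smul]
      exact H.smul_mem b (has x hx)

lemma exists_smul_eq_sum_of_subset_hull {s T : Finset M}
    (hs : ↑s ⊆ hull (Submodule.span R (T : Set M))) :
    ∃ a : R, a ≠ 0 ∧ ∃ c : M → M → R, ∀ x ∈ s, ∑ z ∈ T, c x z • z = a • x := by
  obtain ⟨a, ha, has⟩ := exists_smul_mem_of_subset_hull hs
  choose! c _ hc using fun x hx => Submodule.mem_span_finset.1 (has x hx)
  exact ⟨a, ha, c, hc⟩

end Hull

lemma exists_ne_zero_vecMul_eq_zero {R : Type*} [CommRing R] [Nontrivial R] {ι κ : Type*}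
    [Fintype ι] [Fintype κ] (h : Fintype.card κ < Fintype.card ι) (A : Matrix ι κ R) :
    ∃ β : ι → R, β ≠ 0 ∧ Matrix.vecMul β A = 0 := by
  by_contra! hA
  exact h.not_ge (card_le_of_injective R A.vecMulLinear
    ((injective_iff_map_eq_zero _).2 fun β hβ => not_not.1 fun hβ0 => hA β hβ0 hβ))

section LinearAlgebra

variable {R : Type*} [CommRing R] [IsDomain R] {M : Type u} [AddCommGroup M] [Module R M]

lemma exists_sum_eq_sum_of_card_lt {s T t : Finset M}
    (hs : ↑s ⊆ hull (Submodule.span R (T : Set M))) (hcard : t.card < s.card) :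
    ∃ β : M → R, β ≠ 0 ∧ Function.support β ⊆ ↑s ∧
      ∃ w : M → R, (∀ z ∈ t, w z = 0) ∧ ∑ z ∈ T, w z • z = ∑ x ∈ s, β x • x := by
  classical
  obtain ⟨a, ha, c, hc⟩ := exists_smul_eq_sum_of_subset_hull hs
  obtain ⟨γ, hγ0, hγ⟩ := exists_ne_zero_vecMul_eq_zero (by simpa using hcard)
    (fun (x : s) (z : t) => c x z)
  obtain ⟨x₀, hx₀⟩ := Function.ne_iff.1 hγ0
  let β : M → R := fun x => if hx : x ∈ s then a * γ ⟨x, hx⟩ else 0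
  refine ⟨β, Function.ne_iff.2 ⟨x₀, by simpa [β] using mul_ne_zero ha hx₀⟩,
    fun x hx => not_not.1 fun hxs => hx (dif_neg hxs), fun z => ∑ x : s, γ x * c x z,
    fun z hz => congrFun hγ ⟨z, hz⟩, ?_⟩
  calc ∑ z ∈ T, (∑ x : s, γ x * c x z) • z = ∑ x : s, γ x • ∑ z ∈ T, c x z • z := by
        simp only [Finset.sum_smul, Finset.smul_sum, mul_smul]
        exact Finset.sum_comm
    _ = ∑ x : s, β x • (x : M) := Finset.sum_congr rfl fun x _ => by
        rw [hc x x.2, smul_smul, mul_comm]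
        simp [β]
    _ = ∑ x ∈ s, β x • x := Finset.sum_coe_sort s fun x => β x • x

end LinearAlgebra

/-- Write `b • z = ∑ x ∈ D₁, d z x • x` and pick `z₀` whose coefficient `w z₀ * d z₀ x₀` on `x₀` has
least valuation: the Ulm sequence of `(b * w z₀) • z₀` then lies between those of
`∑ x ∈ D₁, (b * β x) • x` and `(b * β x₀) • x₀`, which agree from some index on. -/
theorem exists_ulmEquiv_of_sum_eq_sum {R : Type*} [CommRing R] [IsDomain R]
    [IsDiscreteValuationRing R] {M : Type u} [AddCommGroup M] [Module R M] {p : R}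
    (hp : Irreducible p) {e : ℕ → WithTop Ordinal.{u}} (he : Monotone e) {D₁ D₂ : Finset M}
    (hD₁ : IsDecompWrt p (D₁ : Set M)) (hD₂ : IsDecompWrt p (D₂ : Set M))
    (hD₂₁ : ↑D₂ ⊆ hull (Submodule.span R (D₁ : Set M))) {β w : M → R}
    (hβ : ∀ x ∈ D₁, β x ≠ 0 → UlmEquiv (UlmSeqOf p x) e) (hβ₀ : ∃ x ∈ D₁, β x ≠ 0)
    (hsum : ∑ z ∈ D₂, w z • z = ∑ x ∈ D₁, β x • x) :
    ∃ z ∈ D₂, w z ≠ 0 ∧ UlmEquiv (UlmSeqOf p z) e := by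
  obtain ⟨b, hb, d, hd⟩ := exists_smul_eq_sum_of_subset_hull hD₂₁
  have hbsum : ∑ z ∈ D₂, (b * w z) • z = ∑ x ∈ D₁, (b * β x) • x := by
    simp only [mul_smul, ← Finset.smul_sum, hsum]
  have hcoeff : ∀ x ∈ D₁, ∑ z ∈ D₂, w z * d z x = b * β x := by
    refine fun x hx => hD₁.eq_of_sum_eq (c := fun x => ∑ z ∈ D₂, w z * d z x)
      (c' := fun x => b * β x) subset_rfl ?_ hx
    calc ∑ x ∈ D₁, (∑ z ∈ D₂, w z * d z x) • x = ∑ z ∈ D₂, w z • ∑ x ∈ D₁, d z x • x := by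
          simp only [Finset.sum_smul, Finset.smul_sum, mul_smul]
          exact Finset.sum_comm
      _ = ∑ z ∈ D₂, (b * w z) • z := Finset.sum_congr rfl fun z hz => by
          rw [hd z hz, smul_smul, mul_comm]
      _ = ∑ x ∈ D₁, (b * β x) • x := hbsum
  obtain ⟨x₀, hx₀, hbβ, N, hN⟩ := hD₁.exists_ulmSeqOf_sum_eventually_eq hp he subset_rfl
    (fun x hx h => hβ x hx (right_ne_zero_of_mul h))
    (hβ₀.imp fun x ⟨hx, hβx⟩ => ⟨hx, mul_ne_zero hb hβx⟩)
  obtain ⟨z₀, hz₀, hdvd⟩ := exists_dvd_sum_of_sum_ne_zero (hcoeff x₀ hx₀ ▸ hbβ)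
  rw [hcoeff x₀ hx₀] at hdvd
  have hw : w z₀ ≠ 0 := fun h => hbβ (zero_dvd_iff.1 (by simpa [h] using hdvd))
  refine ⟨z₀, hz₀, hw, ?_⟩
  have hlower : UlmSeqOf p (∑ x ∈ D₁, (b * β x) • x) ≤ UlmSeqOf p ((b * w z₀) • z₀) :=
    hbsum ▸ hD₂.ulmSeqOf_sum_le subset_rfl _ hz₀
  have hupper : UlmSeqOf p ((b * w z₀) • z₀) ≤ UlmSeqOf p ((b * β x₀) • x₀) := by
    rw [mul_comm, mul_smul, ← hd z₀ hz₀, Finset.smul_sum]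
    simp only [smul_smul]
    exact (hD₁.ulmSeqOf_sum_le subset_rfl _ hx₀).trans (ulmSeqOf_le_of_dvd p hdvd x₀)
  have hev : UlmEquiv (UlmSeqOf p ((b * w z₀) • z₀)) (UlmSeqOf p ((b * β x₀) • x₀)) :=
    ⟨N, N, fun j => le_antisymm (hupper _) (hN j ▸ hlower _)⟩
  exact (ulmEquiv_ulmSeqOf_smul hp (mul_ne_zero hb hw) z₀).symm.trans <| hev.trans <|
    (ulmEquiv_ulmSeqOf_smul hp hbβ x₀).trans (hβ x₀ hx₀ (right_ne_zero_of_mul hbβ))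

end UlmW

instance Zp.isDiscreteValuationRing (p : ℤ) [Fact (Prime p)] : IsDiscreteValuationRing (Zp p) :=
  IsLocalization.AtPrime.isDiscreteValuationRing_of_dedekind_domain ℤ
    (by rw [Ne, Ideal.span_singleton_eq_bot]; exact (Fact.out : Prime p).ne_zero) _

lemma Zp.irreducible (p : ℤ) [Fact (Prime p)] : Irreducible (p : Zp p) := by
  rw [IsDiscreteValuationRing.irreducible_iff_uniformizer,
    ← Localization.AtPrime.map_eq_maximalIdeal, Ideal.map_span, Set.image_singleton, eq_intCast]

theorem statement_3 (p : ℤ) [Fact (Prime p)] {G : Type u} [AddCommGroup G]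
    [Module (Zp p) G]
    (C C' : Set (Set G)) (hC : IsPDBWrt (p : Zp p) C) (hC' : IsPDBWrt (p : Zp p) C')
    (e : ℕ → WithTop Ordinal.{u}) (he : IsUlmSeq e) (n : ℕ)
    (h : ∃ X ∈ C, HasAtLeast (p : Zp p) e n X)
    (Y : Set G) (hY : Y ∈ C') :
    ∃ Z ∈ C', Y ⊆ Z ∧ HasAtLeast (p : Zp p) e n Z := by
  classical
  obtain ⟨X, hXC, s, hsX, hcard, hse⟩ := h
  obtain ⟨Z, hZC', hYZ, hsZ⟩ := hC'.exists_finset_superset_subset_hull hY s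
  obtain ⟨X', hX'C, hXX', hZX'⟩ := hC.exists_finset_superset_subset_hull hXC Z
  set Ze := Z.filter fun z => UlmEquiv (UlmSeqOf (p : Zp p) z) e
  refine ⟨Z, hZC', hYZ, Ze, Finset.coe_subset.2 (Finset.filter_subset _ Z), ?_,
    fun z hz => (Finset.mem_filter.1 hz).2⟩
  by_contra! hlt
  obtain ⟨β, hβ0, hβs, w, hwZe, hsum⟩ := exists_sum_eq_sum_of_card_lt hsZ (hlt.trans_le hcard)
  have hsX' : s ⊆ X' := Finset.coe_subset.1 (hsX.trans hXX')
  obtain ⟨x, hx⟩ := Function.ne_iff.1 hβ0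
  obtain ⟨z, hz, hwz, hze⟩ := exists_ulmEquiv_of_sum_eq_sum (Zp.irreducible p) he.monotone
    (hC.2.2.1 _ hX'C) (hC'.2.2.1 _ hZC') hZX' (fun x _ hx => hse x (hβs hx))
    ⟨x, hsX' (hβs hx), hx⟩
    (hsum.trans (Finset.sum_subset hsX' fun x _ hxs => by
      rw [Function.notMem_support.1 fun hx => hxs (hβs hx), zero_smul]))
  exact hwz (hwZe z (Finset.mem_filter.2 ⟨hz, hze⟩))
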